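/- arXiv:1702.05989 — 3 statements merged into one kernel-verified Lean document; each statement's English description precedes it below -/
import Mathlib

section
/- With s_0 = 0, s_1 = a_1 − 1 and s_k = (a_1 − 1) + a_2 + ⋯ + a_k for k ≥ 2, the quantities l_n, r_n of the recursion satisfy, for every k ≥ 0 and every n with s_k < n ≤ s_{k+1}: r_n > l_n if k is even, and l_n > r_n if k is odd. In particular l_n ≠ r_n for all n. -/
/-! Only `l_n, r_n` matter, and they run the subtractive Euclidean algorithm started at `(α, 1)`:
two subtractions of `α` lead from `(α, 1)` to `(l_1, r_1) = (α, 1 − 2α)`. Let `β_k` be the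
Gauss-map iterates of `α` (so `⌊1/β_k⌋ = pq α k`) and `λ_k = β_0 ⋯ β_{k-1}` (`gaussProd α k`).
Phase `k` starts at `(λ_{k+1}, λ_k)` for even `k` and at `(λ_k, λ_{k+1})` for odd `k`, and
subtracts the smaller entry `⌊1/β_k⌋` times, ending at `λ_k − ⌊1/β_k⌋ λ_{k+1} = λ_{k+2}`.
Irrationality gives `⌊1/β_k⌋ β_k < 1`, so the larger entry stays strictly larger during the
whole phase. Counted from `(α, 1)`, phase `k` starts after `S_k = ⌊1/β_0⌋ + ⋯ + ⌊1/β_{k-1}⌋`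
steps, and `s_k = S_k − 2` for `k ≥ 1`. -/

open Set

noncomputable def rotR (α : ℝ) (x : ℝ) : ℝ := Int.fract (x + α)

/-- The letters `l`, `r` are `false`, `true`. -/
noncomputable def codeR (α : ℝ) (x : ℝ) : Bool :=
  if Int.fract x < 1 - α then false else true

noncomputable def LangR (α : ℝ) : Set (List Bool) :=
  {w | ∃ x ∈ Set.Ico (0 : ℝ) 1, ∃ k : ℕ,
    w = (List.range w.length).map fun j => codeR α ((rotR α)^[k + j] x)}

structure SDI where
  l : ℝ
  r : ℝ
  w : List Bool
  M : List Bool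
  P : List Bool

noncomputable def SDI.step (t : SDI) : SDI :=
  if t.r < t.l then ⟨t.l - t.r, t.r, t.w ++ t.P, t.M ++ t.P, t.P⟩
  else ⟨t.l, t.r - t.l, t.w ++ t.M, t.M, t.P ++ t.M⟩

/-- Meaningful for `n ≥ 1` only: `sdi α 0 = sdi α 1`. -/
noncomputable def sdi (α : ℝ) (n : ℕ) : SDI :=
  SDI.step^[n - 1] ⟨α, 1 - 2 * α, [false], [false], [true, false]⟩

/-- For `α = [0; a_1+1, a_2, a_3, …]`: `pq α 0 = a_1 + 1` and `pq α k = a_{k+1}` for `k ≥ 1`. -/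
noncomputable def pq (α : ℝ) (k : ℕ) : ℤ :=
  ⌊((fun x : ℝ => Int.fract x⁻¹)^[k] α)⁻¹⌋

noncomputable def sB (α : ℝ) (k : ℕ) : ℤ :=
  if k = 0 then 0 else (pq α 0 - 2) + ∑ j ∈ Finset.Icc 2 k, pq α (j - 1)

open Function Finset

noncomputable def subtractStep (p : ℝ × ℝ) : ℝ × ℝ :=
  if p.2 < p.1 then (p.1 - p.2, p.2) else (p.1, p.2 - p.1)

lemma subtractStep_iterate_of_lt {l r : ℝ} (hl : 0 < l) :
    ∀ {j : ℕ}, (j : ℝ) * l < r → subtractStep^[j] (l, r) = (l, r - j * l)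
  | 0, _ => by simp
  | j + 1, h => by
    push_cast at h
    rw [iterate_succ_apply', subtractStep_iterate_of_lt hl (by linarith), subtractStep,
      if_neg (by simp only; linarith)]
    push_cast
    ring_nf

lemma subtractStep_iterate_of_gt {l r : ℝ} (hr : 0 < r) :
    ∀ {j : ℕ}, (j : ℝ) * r < l → subtractStep^[j] (l, r) = (l - j * r, r)
  | 0, _ => by simp
  | j + 1, h => by
    push_cast at h
    rw [iterate_succ_apply', subtractStep_iterate_of_gt hr (by linarith), subtractStep,
      if_pos (by simp only; linarith)]
    push_cast
    ring_nf

lemma SDI.step_lr (t : SDI) : ((SDI.step t).l, (SDI.step t).r) = subtractStep (t.l, t.r) := by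
  unfold SDI.step subtractStep
  split_ifs <;> rfl

lemma sdi_lr {α : ℝ} (h0 : 0 < α) (h2 : α < 1 / 2) {n : ℕ} (hn : 1 ≤ n) :
    ((sdi α n).l, (sdi α n).r) = subtractStep^[n + 1] (α, 1) := by
  have hsemi : Semiconj (fun t : SDI => (t.l, t.r)) SDI.step subtractStep := SDI.step_lr
  have hstart : subtractStep^[2] (α, 1) = (α, 1 - 2 * α) :=
    subtractStep_iterate_of_lt h0 (by push_cast; linarith)
  rw [show n + 1 = n - 1 + 2 by omega, iterate_add_apply, hstart]
  exact hsemi.iterate_right (n - 1) _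

noncomputable def gaussMap (x : ℝ) : ℝ := Int.fract x⁻¹

lemma irrational_gaussMap {x : ℝ} (hx : Irrational x) : Irrational (gaussMap x) :=
  hx.inv.sub_intCast _

lemma Irrational.gaussMap_pos {x : ℝ} (hx : Irrational x) : 0 < gaussMap x :=
  Int.fract_pos.2 fun h => hx.inv.ne_int _ h

lemma gaussMap_lt_one (x : ℝ) : gaussMap x < 1 := Int.fract_lt_one _

lemma mul_gaussMap {x : ℝ} (hx : 0 < x) : x * gaussMap x = 1 - ⌊x⁻¹⌋₊ * x := by
  rw [gaussMap, Int.fract, ← Int.natCast_floor_eq_floor (inv_nonneg.2 hx.le)]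
  field_simp
  push_cast
  ring

lemma Irrational.natFloor_inv_mul_lt_one {x : ℝ} (hirr : Irrational x) (hx : 0 < x) :
    (⌊x⁻¹⌋₊ : ℝ) * x < 1 := by
  have := mul_gaussMap hx
  nlinarith [hirr.gaussMap_pos]

lemma one_le_natFloor_inv {x : ℝ} (hx0 : 0 < x) (hx1 : x < 1) : 1 ≤ ⌊x⁻¹⌋₊ :=
  Nat.le_floor (by simpa using ((one_lt_inv₀ hx0).2 hx1).le)

section Phases

variable (α : ℝ)

noncomputable def phaseLength (k : ℕ) : ℕ := ⌊(gaussMap^[k] α)⁻¹⌋₊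

noncomputable def phaseStart (k : ℕ) : ℕ := ∑ i ∈ range k, phaseLength α i

noncomputable def gaussProd (k : ℕ) : ℝ := ∏ i ∈ range k, gaussMap^[i] α

noncomputable def phaseState (k : ℕ) : ℝ × ℝ :=
  if Even k then (gaussProd α (k + 1), gaussProd α k) else (gaussProd α k, gaussProd α (k + 1))

variable {α}

lemma phaseStart_succ (k : ℕ) : phaseStart α (k + 1) = phaseStart α k + phaseLength α k :=
  sum_range_succ _ _

lemma gaussProd_succ (k : ℕ) : gaussProd α (k + 1) = gaussProd α k * gaussMap^[k] α :=
  prod_range_succ _ _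

lemma irrational_gaussMap_iterate (hirr : Irrational α) : ∀ k, Irrational (gaussMap^[k] α)
  | 0 => hirr
  | k + 1 => by
    rw [iterate_succ_apply']
    exact irrational_gaussMap (irrational_gaussMap_iterate hirr k)

lemma gaussMap_iterate_pos (hirr : Irrational α) (h0 : 0 < α) : ∀ k, 0 < gaussMap^[k] α
  | 0 => h0
  | k + 1 => by
    rw [iterate_succ_apply']
    exact (irrational_gaussMap_iterate hirr k).gaussMap_pos

lemma gaussMap_iterate_lt_one (h1 : α < 1) : ∀ k, gaussMap^[k] α < 1
  | 0 => h1
  | k + 1 => by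
    rw [iterate_succ_apply']
    exact gaussMap_lt_one _

lemma one_le_phaseLength (hirr : Irrational α) (h0 : 0 < α) (h1 : α < 1) (k : ℕ) :
    1 ≤ phaseLength α k :=
  one_le_natFloor_inv (gaussMap_iterate_pos hirr h0 k) (gaussMap_iterate_lt_one h1 k)

lemma two_le_phaseLength_zero (h0 : 0 < α) (h2 : α < 1 / 2) : 2 ≤ phaseLength α 0 :=
  Nat.le_floor <| by
    rw [iterate_zero_apply, Nat.cast_ofNat, le_inv_comm₀ two_pos h0]
    linarith

lemma gaussProd_pos (hirr : Irrational α) (h0 : 0 < α) (k : ℕ) : 0 < gaussProd α k :=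
  prod_pos fun i _ => gaussMap_iterate_pos hirr h0 i

lemma gaussProd_add_two (hirr : Irrational α) (h0 : 0 < α) (k : ℕ) :
    gaussProd α (k + 2) = gaussProd α k - phaseLength α k * gaussProd α (k + 1) := by
  rw [gaussProd_succ, gaussProd_succ, iterate_succ_apply', mul_assoc,
    mul_gaussMap (gaussMap_iterate_pos hirr h0 k), phaseLength]
  ring

lemma phaseLength_mul_gaussProd_lt (hirr : Irrational α) (h0 : 0 < α) (k : ℕ) :
    phaseLength α k * gaussProd α (k + 1) < gaussProd α k := by
  have hlt := (irrational_gaussMap_iterate hirr k).natFloor_inv_mul_lt_one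
    (gaussMap_iterate_pos hirr h0 k)
  rw [gaussProd_succ, phaseLength]
  nlinarith [gaussProd_pos hirr h0 k]

lemma subtractStep_iterate_phaseStart (hirr : Irrational α) (h0 : 0 < α) :
    ∀ k, subtractStep^[phaseStart α k] (α, 1) = phaseState α k
  | 0 => by simp [phaseStart, phaseState, gaussProd]
  | k + 1 => by
    have hlt := phaseLength_mul_gaussProd_lt hirr h0 k
    have hpos := gaussProd_pos hirr h0 (k + 1)
    rw [phaseStart_succ, add_comm, iterate_add_apply,
      subtractStep_iterate_phaseStart hirr h0 k, phaseState, phaseState]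
    rcases Nat.even_or_odd k with hk | hk
    · rw [if_pos hk, if_neg (Nat.not_even_iff_odd.2 hk.add_one),
        subtractStep_iterate_of_lt hpos hlt, gaussProd_add_two hirr h0]
    · rw [if_neg (Nat.not_even_iff_odd.2 hk), if_pos hk.add_one,
        subtractStep_iterate_of_gt hpos hlt, gaussProd_add_two hirr h0]

lemma subtractStep_iterate_sign (hirr : Irrational α) (h0 : 0 < α) {k m : ℕ}
    (hkm : phaseStart α k ≤ m) (hmk : m < phaseStart α (k + 1)) :
    (Even k → (subtractStep^[m] (α, 1)).1 < (subtractStep^[m] (α, 1)).2) ∧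
      (Odd k → (subtractStep^[m] (α, 1)).2 < (subtractStep^[m] (α, 1)).1) := by
  obtain ⟨i, rfl⟩ := Nat.exists_eq_add_of_le' hkm
  rw [phaseStart_succ] at hmk
  have hpos := gaussProd_pos hirr h0 (k + 1)
  have hi : ((i : ℝ) + 1) * gaussProd α (k + 1) < gaussProd α k :=
    calc ((i : ℝ) + 1) * gaussProd α (k + 1) ≤ phaseLength α k * gaussProd α (k + 1) := by
          gcongr
          exact_mod_cast (by omega : i + 1 ≤ phaseLength α k)
      _ < gaussProd α k := phaseLength_mul_gaussProd_lt hirr h0 k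
  rw [iterate_add_apply, subtractStep_iterate_phaseStart hirr h0, phaseState]
  refine ⟨fun hk => ?_, fun hk => ?_⟩
  · rw [if_pos hk, subtractStep_iterate_of_lt hpos (by linarith)]
    dsimp only
    linarith
  · rw [if_neg (Nat.not_even_iff_odd.2 hk), subtractStep_iterate_of_gt hpos (by linarith)]
    dsimp only
    linarith

lemma exists_phaseStart_le_lt (hirr : Irrational α) (h0 : 0 < α) (h1 : α < 1) (m : ℕ) :
    ∃ k, phaseStart α k ≤ m ∧ m < phaseStart α (k + 1) := by
  have hmono : StrictMono (phaseStart α) := strictMono_nat_of_lt_succ fun k => by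
    have := one_le_phaseLength hirr h0 h1 k
    rw [phaseStart_succ]
    omega
  obtain ⟨k, hk, hk'⟩ :=
    hmono.exists_between_of_tendsto_atTop hmono.tendsto_atTop (x := m + 1) (by simp [phaseStart])
  exact ⟨k, by omega, by omega⟩

lemma pq_eq_phaseLength (h0 : 0 ≤ α) (k : ℕ) : pq α k = phaseLength α k := by
  have hβ : 0 ≤ gaussMap^[k] α := by
    cases k with
    | zero => exact h0
    | succ k => rw [iterate_succ_apply']; exact Int.fract_nonneg _
  rw [phaseLength, Int.natCast_floor_eq_floor (inv_nonneg.2 hβ)]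
  rfl

lemma sB_succ {k : ℕ} (hk : k ≠ 0) : sB α (k + 1) = sB α k + pq α k := by
  rw [sB, sB, if_neg hk, if_neg k.succ_ne_zero, sum_Icc_succ_top (by omega), Nat.add_sub_cancel]
  ring

lemma sB_eq (h0 : 0 ≤ α) {k : ℕ} (hk : k ≠ 0) : sB α k = phaseStart α k - 2 := by
  induction k, Nat.one_le_iff_ne_zero.2 hk using Nat.le_induction with
  | base => simp [sB, phaseStart, pq_eq_phaseLength h0]
  | succ k hk ih =>
    rw [sB_succ (by omega), ih (by omega), phaseStart_succ, pq_eq_phaseLength h0]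
    push_cast
    ring

lemma sB_add_two (h0 : 0 < α) (h2 : α < 1 / 2) (k : ℕ) :
    sB α k + 2 = max (phaseStart α k : ℤ) 2 := by
  rcases eq_or_ne k 0 with rfl | hk
  · simp [sB, phaseStart]
  · have h2k : phaseLength α 0 ≤ phaseStart α k := by
      simpa [phaseStart] using sum_le_sum_of_subset (f := phaseLength α)
        (range_subset_range.2 (Nat.one_le_iff_ne_zero.2 hk))
    have := two_le_phaseLength_zero h0 h2
    rw [sB_eq h0.le hk]
    omega

end Phases

/-- Proposition: for every `k ≥ 0` and every `n` with `s_k < n ≤ s_{k+1}` one has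
`r_n > l_n` if `k` is even and `l_n > r_n` if `k` is odd; in particular `l_n ≠ r_n`
for all `n ≥ 1`. -/
theorem sign_pattern_of_recursion
    (α : ℝ) (hirr : Irrational α) (h0 : 0 < α) (h2 : α < 1/2) :
    (∀ k n : ℕ, sB α k < (n : ℤ) → (n : ℤ) ≤ sB α (k + 1) →
      ((Even k → (sdi α n).l < (sdi α n).r) ∧ (Odd k → (sdi α n).r < (sdi α n).l))) ∧
    (∀ n : ℕ, 1 ≤ n → (sdi α n).l ≠ (sdi α n).r) := by
  have sign : ∀ k n : ℕ, 1 ≤ n → phaseStart α k ≤ n + 1 → n + 1 < phaseStart α (k + 1) →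
      (Even k → (sdi α n).l < (sdi α n).r) ∧ (Odd k → (sdi α n).r < (sdi α n).l) := by
    intro k n hn hkn hnk
    have := subtractStep_iterate_sign hirr h0 hkn hnk
    rwa [← sdi_lr h0 h2 hn] at this
  refine ⟨fun k n hlo hhi => ?_, fun n hn => ?_⟩
  · have hk := sB_add_two h0 h2 k
    have hk' := sB_add_two h0 h2 (k + 1)
    exact sign k n (by omega) (by omega) (by omega)
  · obtain ⟨k, hkn, hnk⟩ := exists_phaseStart_le_lt hirr h0 (by linarith) (n + 1)
    obtain ⟨hev, hodd⟩ := sign k n hn hkn hnk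
    rcases Nat.even_or_odd k with hk | hk
    · exact (hev hk).ne
    · exact (hodd hk).ne'
end

section
/- For every n ≥ a_1 + 1, there are exactly two words of length |w_n| + min(|P_n|, |M_n|) in L(R) having w_n as a prefix, and there is a word V_n such that these two words are w_n·l·r·V_n and w_n·r·l·V_n. -/
open Set

noncomputable def wordOf (α x : ℝ) (m : ℕ) : List Bool :=
  (List.range m).map fun j => codeR α ((rotR α)^[j] x)

lemma fract_shift (a b : ℝ) : Int.fract (a + b) = Int.fract (Int.fract a + b) := by
  have h : a + b = (Int.fract a + b) + (⌊a⌋ : ℝ) := by rw [Int.fract]; ring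
  rw [h, Int.fract_add_intCast]

lemma rot_mem (α x : ℝ) : rotR α x ∈ Set.Ico (0:ℝ) 1 :=
  ⟨Int.fract_nonneg _, Int.fract_lt_one _⟩

lemma iter_mem {α x : ℝ} (hx : x ∈ Set.Ico (0:ℝ) 1) (k : ℕ) :
    (rotR α)^[k] x ∈ Set.Ico (0:ℝ) 1 := by
  cases k with
  | zero => simpa using hx
  | succ k => rw [Function.iterate_succ_apply']; exact rot_mem _ _

lemma iter_rot {α x : ℝ} (hx : x ∈ Set.Ico (0:ℝ) 1) (j : ℕ) :
    (rotR α)^[j] x = Int.fract (x + j * α) := by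
  induction j with
  | zero => simpa using (Int.fract_eq_self.2 ⟨hx.1, hx.2⟩).symm
  | succ j ih =>
      rw [Function.iterate_succ_apply', ih, rotR, ← fract_shift]
      push_cast; ring_nf

@[simp] lemma wordOf_length (α x : ℝ) (m : ℕ) : (wordOf α x m).length = m := by
  simp [wordOf]

lemma wordOf_append (α x : ℝ) (m n : ℕ) :
    wordOf α x (m + n) = wordOf α x m ++ wordOf α ((rotR α)^[m] x) n := by
  unfold wordOf
  rw [List.range_add, List.map_append, List.map_map]
  congr 1
  apply List.map_congr_left
  intro j _
  simp only [Function.comp_apply]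
  rw [add_comm m j, Function.iterate_add_apply]

lemma wordOf_take (α x : ℝ) {k m : ℕ} (h : k ≤ m) :
    (wordOf α x m).take k = wordOf α x k := by
  obtain ⟨d, rfl⟩ := Nat.exists_eq_add_of_le h
  rw [wordOf_append, List.take_append_of_le_length (by simp), List.take_of_length_le (by simp)]

lemma mem_Lang_iff {α : ℝ} {u : List Bool} :
    u ∈ LangR α ↔ ∃ x ∈ Set.Ico (0:ℝ) 1, u = wordOf α x u.length := by
  constructor
  · rintro ⟨x, hx, k, hu⟩
    refine ⟨(rotR α)^[k] x, iter_mem hx k, ?_⟩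
    conv_lhs => rw [hu]
    unfold wordOf
    apply List.map_congr_left
    intro j _
    rw [add_comm k j, Function.iterate_add_apply]
  · rintro ⟨x, hx, hu⟩
    exact ⟨x, hx, 0, by simpa [wordOf] using hu⟩

lemma wordOf_mem_Lang {α x : ℝ} (hx : x ∈ Set.Ico (0:ℝ) 1) (m : ℕ) :
    wordOf α x m ∈ LangR α :=
  mem_Lang_iff.2 ⟨x, hx, by rw [wordOf_length]⟩


def Good (α : ℝ) (t : SDI) : Prop :=
  (∃ a b c d : ℤ, t.l = a + b*α ∧ t.r = c + d*α ∧ a*d - b*c = -1) ∧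
  0 < t.l ∧ 0 < t.r ∧ t.l ≤ α ∧ t.r ≤ 1 - 2*α ∧
  (∃ T, t.M ++ t.P = false :: true :: T ∧ t.P ++ t.M = true :: false :: T) ∧
  ∃ γ : ℝ, 0 ≤ γ ∧ γ + t.l + t.r ≤ 1 ∧
    Int.fract (γ + t.w.length * α) = 1 - α - t.r ∧
    (∀ x, γ ≤ x → x < γ + t.l + t.r → wordOf α x t.w.length = t.w) ∧
    (∀ x, 0 ≤ x → x < 1 → wordOf α x t.w.length = t.w → γ ≤ x ∧ x < γ + t.l + t.r) ∧
    (∀ y, 1 - α - t.r ≤ y → y < 1 - α →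
      wordOf α y t.M.length = t.M ∧ (rotR α)^[t.M.length] y = y + t.l) ∧
    (∀ y, 1 - α ≤ y → y < 1 - α + t.l →
      wordOf α y t.P.length = t.P ∧ (rotR α)^[t.P.length] y = y - t.r)

section
variable {α : ℝ} (h0 : 0 < α) (h2 : α < 1/2) (hirr : Irrational α)

/-- evaluation of the orbit position after reading `w`. -/
lemma orbit_pos {γ : ℝ} {N : ℕ} {c : ℝ} (hfr : Int.fract (γ + N * α) = c)
    {x : ℝ} (hx0 : 0 ≤ x) (hx1 : x < 1) (hlo : 0 ≤ c + (x - γ)) (hhi : c + (x - γ) < 1) :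
    (rotR α)^[N] x = c + (x - γ) := by
  rw [iter_rot ⟨hx0, hx1⟩, show x + (N:ℝ) * α = (γ + N * α) + (x - γ) by ring,
    fract_shift, hfr, Int.fract_eq_self.2 ⟨hlo, hhi⟩]

include h0 h2 hirr in
lemma good_step {t : SDI} (hg : Good α t) : Good α t.step := by
  obtain ⟨⟨a, b, c, d, hla, hra, hdet⟩, hl0, hr0, hlα, hrα, ⟨T, hMP, hPM⟩,
    γ, hγ0, hγ1, hfr, hA1, hA2, hB, hC⟩ := hg
  have hβr : (0:ℝ) ≤ 1 - α - t.r := by linarith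
  have hβl : 1 - α + t.l ≤ 1 := by linarith
  have hlr : t.l ≠ t.r := by
    intro he
    have h' : ((a:ℝ) - c) + ((b:ℝ) - d) * α = 0 := by
      rw [hla, hra] at he; linarith
    have hbd : b = d := by
      by_contra hbd
      have hbd' : ((b:ℝ) - d) ≠ 0 := by
        intro h0'; exact hbd (by exact_mod_cast sub_eq_zero.1 h0')
      refine hirr ⟨(c - a)/(b - d), ?_⟩
      push_cast
      rw [div_eq_iff hbd']
      linarith
    have hac : a = c := by
      have h'' : (a:ℝ) = c := by
        rw [hbd] at h'; linarith
      exact_mod_cast h''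
    rw [hbd, hac, mul_comm] at hdet
    simp at hdet
  -- M, P nonempty and head letters
  have hMne : t.M ≠ [] := by
    intro h; rw [h] at hMP hPM; simp at hMP hPM
    rw [hMP] at hPM; simp at hPM
  have hPne : t.P ≠ [] := by
    intro h; rw [h] at hMP hPM; simp at hMP hPM
    rw [hMP] at hPM; simp at hPM
  have hM1 : 1 ≤ t.M.length := List.length_pos_iff.2 hMne
  have hP1 : 1 ≤ t.P.length := List.length_pos_iff.2 hPne
  have hMtake : t.M.take 1 = [false] := by
    have := congrArg (List.take 1) hMP
    rwa [List.take_append_of_le_length hM1] at this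
  have hPtake : t.P.take 1 = [true] := by
    have := congrArg (List.take 1) hPM
    rwa [List.take_append_of_le_length hP1] at this
  -- the two cases
  rcases lt_or_gt_of_ne hlr with hcase | hcase
  · -- l < r : else branch
    rw [SDI.step, if_neg (not_lt.2 hcase.le)]
    refine ⟨⟨a, b, c - a, d - b, by simpa using hla, by push_cast; rw [hra, hla]; ring,
      by push_cast at hdet ⊢; linear_combination hdet⟩,
      hl0, by simpa using sub_pos.2 hcase, hlα, by simp only; linarith, ?_, ?_⟩
    · exact ⟨T ++ t.M, by simp only; rw [← List.append_assoc, hMP]; simp,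
        by simp only; rw [hPM]; simp⟩
    refine ⟨γ, hγ0, by simp only; linarith, ?_, ?_, ?_, ?_, ?_⟩
    · -- A3
      simp only [List.length_append]
      push_cast
      rw [show γ + ((t.w.length:ℝ) + t.M.length) * α
          = (γ + t.w.length * α) + t.M.length * α by ring, fract_shift, hfr]
      have hy := hB (1 - α - t.r) le_rfl (by linarith)
      have : (rotR α)^[t.M.length] (1 - α - t.r) = 1 - α - t.r + t.l := hy.2
      rw [iter_rot ⟨hβr, by linarith⟩] at this
      rw [this]; ring_nf
    · -- A1
      intro x hx1 hx2
      simp only at hx2 ⊢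
      have hx0 : 0 ≤ x := le_trans hγ0 hx1
      have hxlt1 : x < 1 := by linarith
      have hpos : (rotR α)^[t.w.length] x = (1 - α - t.r) + (x - γ) :=
        orbit_pos hfr hx0 hxlt1 (by linarith) (by linarith)
      rw [List.length_append, wordOf_append,
        hA1 x hx1 (by linarith), hpos]
      congr 1
      exact (hB _ (by linarith) (by linarith)).1
    · -- A2
      intro x hx0 hx1 hw
      simp only [List.length_append] at hw
      have hwpre : wordOf α x t.w.length = t.w := by
        have h' := congrArg (List.take t.w.length) hw
        rwa [wordOf_take _ _ (Nat.le_add_right _ _), List.take_left] at h'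
      obtain ⟨hg1, hg2⟩ := hA2 x hx0 hx1 hwpre
      refine ⟨hg1, ?_⟩
      simp only
      by_contra hcon
      push_neg at hcon
      have hpos : (rotR α)^[t.w.length] x = (1 - α - t.r) + (x - γ) :=
        orbit_pos hfr hx0 hx1 (by linarith) (by linarith)
      have hyP := hC ((1 - α - t.r) + (x - γ)) (by linarith) (by linarith)
      -- word at position w.length starts with M (from hw) but also with P (from hyP)
      have hMword : wordOf α ((rotR α)^[t.w.length] x) t.M.length = t.M := by
        have h' := congrArg (List.drop t.w.length) hw
        rwa [wordOf_append, List.drop_left' (by simp), List.drop_left] at h'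
      rw [hpos] at hMword
      have h1 : wordOf α ((1 - α - t.r) + (x - γ)) 1 = [false] := by
        rw [← hMtake, ← hMword, wordOf_take _ _ hM1]
      have h2 : wordOf α ((1 - α - t.r) + (x - γ)) 1 = [true] := by
        rw [← hPtake, ← hyP.1, wordOf_take _ _ hP1]
      rw [h1] at h2; simp at h2
    · -- B
      intro y hy1 hy2
      simp only at hy1 ⊢
      exact hB y (by linarith) hy2
    · -- C
      intro y hy1 hy2
      simp only at hy1 hy2 ⊢
      obtain ⟨hPw, hPr⟩ := hC y hy1 (by linarith)
      have hz1 : 1 - α - t.r ≤ y - t.r := by linarith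
      have hz2 : y - t.r < 1 - α := by linarith
      obtain ⟨hMw, hMr⟩ := hB (y - t.r) hz1 hz2
      constructor
      · rw [List.length_append, wordOf_append, hPw, hPr, hMw]
      · rw [List.length_append, add_comm, Function.iterate_add_apply, hPr, hMr]; ring
  · -- r < l : then branch
    rw [SDI.step, if_pos hcase]
    refine ⟨⟨a - c, b - d, c, d, by push_cast; rw [hla, hra]; ring, by simpa using hra,
      by push_cast at hdet ⊢; linear_combination hdet⟩,
      by simpa using sub_pos.2 hcase, hr0, by simp only; linarith, hrα, ?_, ?_⟩
    · exact ⟨T ++ t.P, by simp only; rw [hMP]; simp,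
        by simp only; rw [← List.append_assoc, hPM]; simp⟩
    refine ⟨γ + t.r, by positivity, by simp only; linarith, ?_, ?_, ?_, ?_, ?_⟩
    · -- A3
      simp only [List.length_append]
      push_cast
      have e1 : Int.fract (γ + t.r + (t.w.length:ℝ) * α) = 1 - α := by
        rw [show γ + t.r + (t.w.length:ℝ)*α = (γ + t.w.length*α) + t.r by ring,
          fract_shift, hfr, show 1 - α - t.r + t.r = 1 - α by ring,
          Int.fract_eq_self.2 ⟨by linarith, by linarith⟩]
      have hy := (hC (1-α) le_rfl (by linarith)).2
      rw [iter_rot ⟨by linarith, by linarith⟩] at hy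
      rw [show γ + t.r + ((t.w.length:ℝ) + t.P.length) * α
          = (γ + t.r + (t.w.length:ℝ) * α) + t.P.length * α by ring, fract_shift, e1, hy]
    · -- A1
      intro x hx1 hx2
      simp only at hx1 hx2 ⊢
      have hx0 : 0 ≤ x := by linarith
      have hxlt1 : x < 1 := by linarith
      have hpos : (rotR α)^[t.w.length] x = (1 - α - t.r) + (x - γ) :=
        orbit_pos hfr hx0 hxlt1 (by linarith) (by linarith)
      rw [List.length_append, wordOf_append,
        hA1 x (by linarith) (by linarith), hpos]
      congr 1
      exact (hC _ (by linarith) (by linarith)).1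
    · -- A2
      intro x hx0 hx1 hw
      simp only [List.length_append] at hw
      have hwpre : wordOf α x t.w.length = t.w := by
        have h' := congrArg (List.take t.w.length) hw
        rwa [wordOf_take _ _ (Nat.le_add_right _ _), List.take_left] at h'
      obtain ⟨hg1, hg2⟩ := hA2 x hx0 hx1 hwpre
      simp only
      constructor
      · by_contra hcon
        push_neg at hcon
        have hpos : (rotR α)^[t.w.length] x = (1 - α - t.r) + (x - γ) :=
          orbit_pos hfr hx0 hx1 (by linarith) (by linarith)
        have hyM := hB ((1 - α - t.r) + (x - γ)) (by linarith) (by linarith)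
        have hPword : wordOf α ((rotR α)^[t.w.length] x) t.P.length = t.P := by
          have h' := congrArg (List.drop t.w.length) hw
          rwa [wordOf_append, List.drop_left' (by simp), List.drop_left] at h'
        rw [hpos] at hPword
        have h1 : wordOf α ((1 - α - t.r) + (x - γ)) 1 = [true] := by
          rw [← hPtake, ← hPword, wordOf_take _ _ hP1]
        have h2 : wordOf α ((1 - α - t.r) + (x - γ)) 1 = [false] := by
          rw [← hMtake, ← hyM.1, wordOf_take _ _ hM1]
        rw [h1] at h2; simp at h2
      · linarith
    · -- B
      intro y hy1 hy2
      simp only at hy1 hy2 ⊢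
      obtain ⟨hMw, hMr⟩ := hB y hy1 hy2
      have hz1 : 1 - α ≤ y + t.l := by linarith
      have hz2 : y + t.l < 1 - α + t.l := by linarith
      obtain ⟨hPw, hPr⟩ := hC (y + t.l) hz1 hz2
      constructor
      · rw [List.length_append, wordOf_append, hMw, hMr, hPw]
      · rw [List.length_append, add_comm, Function.iterate_add_apply, hMr, hPr]; ring
    · -- C
      intro y hy1 hy2
      simp only at hy1 hy2 ⊢
      exact hC y hy1 (by linarith)

lemma wordOf_one (α x : ℝ) : wordOf α x 1 = [codeR α x] := by simp [wordOf, List.range_succ]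

lemma wordOf_two (α x : ℝ) : wordOf α x 2 = [codeR α x, codeR α (rotR α x)] := by
  simp [wordOf, List.range_succ]

lemma codeR_false {α x : ℝ} (h0 : 0 ≤ x) (h1 : x < 1) (h : x < 1 - α) :
    codeR α x = false := by
  rw [codeR, Int.fract_eq_self.2 ⟨h0, h1⟩, if_pos h]

lemma codeR_true {α x : ℝ} (h0 : 0 ≤ x) (h1 : x < 1) (h : 1 - α ≤ x) :
    codeR α x = true := by
  rw [codeR, Int.fract_eq_self.2 ⟨h0, h1⟩, if_neg (not_lt.2 h)]

include h0 h2 in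
lemma good_init : Good α ⟨α, 1 - 2*α, [false], [false], [true, false]⟩ := by
  have hα1 : α < 1 := by linarith
  refine ⟨⟨0, 1, 1, -2, by push_cast; ring, by push_cast; ring, by decide⟩,
    h0, by simp only; linarith, le_rfl, le_rfl, ⟨[false], rfl, rfl⟩,
    0, le_rfl, by simp only; linarith, ?_, ?_, ?_, ?_, ?_⟩
  · simp only [List.length_singleton]
    push_cast
    rw [show (0:ℝ) + 1*α = α by ring, Int.fract_eq_self.2 ⟨h0.le, hα1⟩]
    ring
  · intro x hx1 hx2
    simp only at hx2
    show wordOf α x 1 = [false]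
    rw [wordOf_one, codeR_false hx1 (by linarith) (by linarith)]
  · intro x hx0 hx1 hw
    simp only
    rw [show ([false]:List Bool).length = 1 from rfl, wordOf_one] at hw
    by_cases hx : x < 1 - α
    · exact ⟨hx0, by linarith⟩
    · rw [codeR_true hx0 hx1 (not_lt.1 hx)] at hw; simp at hw
  · intro y hy1 hy2
    simp only at hy1 ⊢
    refine ⟨?_, ?_⟩
    · rw [show ([false]:List Bool).length = 1 from rfl, wordOf_one,
        codeR_false (by linarith) (by linarith) (by linarith)]
    · show (rotR α)^[1] y = y + α
      rw [Function.iterate_one, rotR, Int.fract_eq_self.2 ⟨by linarith, by linarith⟩]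
  · intro y hy1 hy2
    simp only at hy2 ⊢
    have hry : rotR α y = y + α - 1 := by
      rw [rotR, ← Int.fract_sub_intCast (y+α) 1]
      push_cast
      exact Int.fract_eq_self.2 ⟨by linarith, by linarith⟩
    refine ⟨?_, ?_⟩
    · rw [show ([true, false]:List Bool).length = 2 from rfl, wordOf_two, hry,
        codeR_true (by linarith) (by linarith) (by linarith),
        codeR_false (by linarith) (by linarith) (by linarith)]
    · show (rotR α)^[2] y = y - (1 - 2*α)
      rw [show (rotR α)^[2] y = rotR α (rotR α y) from rfl, hry, rotR,
        Int.fract_eq_self.2 ⟨by linarith, by linarith⟩]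
      ring

lemma sdi_succ (n : ℕ) (hn : 1 ≤ n) : sdi α (n + 1) = (sdi α n).step := by
  unfold sdi
  obtain ⟨k, rfl⟩ := Nat.exists_eq_add_of_le hn
  rw [show 1 + k + 1 - 1 = (1 + k - 1) + 1 by omega, Function.iterate_succ_apply']

include h0 h2 hirr in
lemma sdi_good (n : ℕ) : Good α (sdi α n) := by
  unfold sdi
  induction n - 1 with
  | zero => exact good_init h0 h2
  | succ k ih => rw [Function.iterate_succ_apply']; exact good_step h0 h2 hirr ih

include h0 hirr in
lemma floor_lt_inv : (⌊α⁻¹⌋ : ℝ) < α⁻¹ := by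
  rcases lt_or_eq_of_le (Int.floor_le α⁻¹) with h | h
  · exact h
  · exfalso
    apply hirr
    exact ⟨((⌊α⁻¹⌋ : ℚ))⁻¹, by
      push_cast
      rw [h, inv_inv]⟩

include h0 h2 hirr in
lemma sdi_shape : ∀ k : ℕ, 1 ≤ k → ((k:ℤ) + 1 ≤ ⌊α⁻¹⌋) →
    sdi α k = ⟨α, 1 - ((k:ℝ) + 1) * α, List.replicate k false, [false],
      true :: List.replicate k false⟩ := by
  intro k hk
  induction k, hk using Nat.le_induction with
  | base =>
      intro _
      show (⟨α, 1 - 2*α, [false], [false], [true, false]⟩ : SDI) = _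
      simp [SDI.mk.injEq, List.replicate]
      norm_num
  | succ k hk1 ih =>
      intro hk2
      have hfl := floor_lt_inv h0 hirr
      have hsh := ih (by omega)
      have hlt1 : ((k:ℝ) + 2) * α < 1 := by
        have h1 : ((k:ℝ) + 2) ≤ (⌊α⁻¹⌋ : ℝ) := by
          have : ((k:ℤ) + 2 : ℤ) ≤ ⌊α⁻¹⌋ := by omega
          exact_mod_cast this
        have h2' : ((k:ℝ) + 2) < α⁻¹ := lt_of_le_of_lt h1 hfl
        have := mul_lt_mul_of_pos_right h2' h0
        rwa [inv_mul_cancel₀ (ne_of_gt h0)] at this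
      have hl2 : ((k:ℝ) + 1) * α + α = ((k:ℝ) + 2) * α := by ring
      rw [sdi_succ _ hk1, hsh, SDI.step]
      rw [if_neg (by simp only; push_neg; linarith)]
      congr 1
      · push_cast; ring
      · rw [List.replicate_succ']
      · rw [List.replicate_succ']
        rfl

lemma step_len (t : SDI) :
    t.M.length ≤ t.step.M.length ∧ t.P.length ≤ t.step.P.length := by
  rw [SDI.step]; split <;> simp

include h0 h2 hirr in
lemma sdi_min_len : ∀ n : ℕ, (⌊α⁻¹⌋ ≤ (n:ℤ)) →
    2 ≤ (sdi α n).M.length ∧ 2 ≤ (sdi α n).P.length := by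
  have hfl := floor_lt_inv h0 hirr
  have hA2 : (2:ℤ) ≤ ⌊α⁻¹⌋ := by
    rw [Int.le_floor]
    push_cast
    rw [show α⁻¹ = 1/α by rw [one_div]]
    rw [le_div_iff₀ h0]
    linarith
  set A : ℕ := ⌊α⁻¹⌋.toNat with hA
  have hAZ : (A:ℤ) = ⌊α⁻¹⌋ := Int.toNat_of_nonneg (by omega)
  have hA2' : 2 ≤ A := by omega
  have base : 2 ≤ (sdi α A).M.length ∧ 2 ≤ (sdi α A).P.length := by
    have hsh := sdi_shape h0 h2 hirr (A - 1) (by omega)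
      (by rw [← hAZ]; push_cast; omega)
    have hgt : 1 < ((A:ℝ)) * α + α := by
      have h1 : α⁻¹ < (⌊α⁻¹⌋ : ℝ) + 1 := Int.lt_floor_add_one _
      have h1' : α⁻¹ < (A:ℝ) + 1 := by rw [← hAZ] at h1; push_cast at h1; linarith
      have := mul_lt_mul_of_pos_right h1' h0
      rw [inv_mul_cancel₀ (ne_of_gt h0)] at this
      linarith [this]
    have hcast : ((A - 1 : ℕ) : ℝ) + 1 = (A:ℝ) := by
      have : ((A - 1 : ℕ) : ℝ) = (A:ℝ) - 1 := by
        push_cast [Nat.cast_sub (by omega : 1 ≤ A)]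
        ring
      linarith [this]
    rw [show A = (A - 1) + 1 by omega, sdi_succ _ (by omega), hsh, SDI.step]
    rw [if_pos (by simp only; rw [hcast]; linarith)]
    constructor <;> simp <;> omega
  intro n hn
  have hn' : A ≤ n := by omega
  clear hn
  induction n, hn' using Nat.le_induction with
  | base => exact base
  | succ n hn ih =>
      rw [sdi_succ _ (by omega)]
      exact ⟨le_trans ih.1 (step_len _).1, le_trans ih.2 (step_len _).2⟩
end

/-- Lemma: for `n ≥ a_1 + 1` (where `α = [0; a_1+1, a_2, …]`, so `a_1 + 1 = pq α 0`),
there are exactly two words of length `|w_n| + min(|P_n|, |M_n|)` in `L(R)` having `w_n`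
as a prefix, and for some word `V_n` they are `w_n·l·r·V_n` and `w_n·r·l·V_n`
(letters: `l = false`, `r = true`). -/
theorem two_extensions_of_bispecial
    (α : ℝ) (hirr : Irrational α) (h0 : 0 < α) (h2 : α < 1/2) :
    ∀ n : ℕ, pq α 0 ≤ (n : ℤ) →
      ({u | u ∈ LangR α ∧ (sdi α n).w <+: u ∧
          u.length = (sdi α n).w.length + min (sdi α n).P.length (sdi α n).M.length}).ncard
        = 2 ∧
      ∃ V : List Bool,
        {u | u ∈ LangR α ∧ (sdi α n).w <+: u ∧
            u.length = (sdi α n).w.length + min (sdi α n).P.length (sdi α n).M.length} =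
          {(sdi α n).w ++ [false, true] ++ V, (sdi α n).w ++ [true, false] ++ V} := by
  intro n hn
  have hpq : pq α 0 = ⌊α⁻¹⌋ := by simp [pq]
  rw [hpq] at hn
  obtain ⟨hM2, hP2⟩ := sdi_min_len h0 h2 hirr n hn
  obtain ⟨_, hl0, hr0, hlα, hrα, ⟨T, hMP, hPM⟩, γ, hγ0, hγ1, hfr, hA1, hA2, hB, hC⟩ :=
    sdi_good h0 h2 hirr n
  set t := sdi α n with ht
  set m := min t.P.length t.M.length with hm
  have hmM : m ≤ t.M.length := min_le_right _ _
  have hmP : m ≤ t.P.length := min_le_left _ _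
  have hm2 : 2 ≤ m := le_min hP2 hM2
  obtain ⟨m', hm'⟩ : ∃ m', m = m' + 2 := ⟨m - 2, by omega⟩
  set V : List Bool := T.take m' with hV
  have hMt : t.M.take m = [false, true] ++ V := by
    rw [← List.take_append_of_le_length hmM, hMP, hm']
    simp [hV, List.take_succ_cons]
  have hPt : t.P.take m = [true, false] ++ V := by
    rw [← List.take_append_of_le_length hmP, hPM, hm']
    simp [hV, List.take_succ_cons]
  have hβr : (0:ℝ) ≤ 1 - α - t.r := by linarith
  have hβl : 1 - α + t.l ≤ 1 := by linarith
  -- the two candidate words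
  set u₁ : List Bool := t.w ++ [false, true] ++ V with hu₁
  set u₂ : List Bool := t.w ++ [true, false] ++ V with hu₂
  have key : ∀ x, γ ≤ x → x < γ + t.l + t.r →
      wordOf α x (t.w.length + m) = (if x < γ + t.r then u₁ else u₂) := by
    intro x hx1 hx2
    have hx0 : 0 ≤ x := le_trans hγ0 hx1
    have hxlt1 : x < 1 := by linarith
    have hpos : (rotR α)^[t.w.length] x = (1 - α - t.r) + (x - γ) :=
      orbit_pos hfr hx0 hxlt1 (by linarith) (by linarith)
    rw [wordOf_append, hA1 x hx1 hx2, hpos]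
    split
    · rename_i hcase
      have hw := (hB ((1 - α - t.r) + (x - γ)) (by linarith) (by linarith)).1
      have hwm : wordOf α (1 - α - t.r + (x - γ)) m = [false, true] ++ V := by
        rw [← hMt, ← hw, wordOf_take α _ hmM]
      rw [hwm, hu₁, ← List.append_assoc]
    · rename_i hcase
      push_neg at hcase
      have hw := (hC ((1 - α - t.r) + (x - γ)) (by linarith) (by linarith)).1
      have hwm : wordOf α (1 - α - t.r + (x - γ)) m = [true, false] ++ V := by
        rw [← hPt, ← hw, wordOf_take α _ hmP]
      rw [hwm, hu₂, ← List.append_assoc]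
  -- set equality
  have hset : {u | u ∈ LangR α ∧ t.w <+: u ∧ u.length = t.w.length + m} = {u₁, u₂} := by
    ext u
    simp only [Set.mem_setOf_eq, Set.mem_insert_iff, Set.mem_singleton_iff]
    constructor
    · rintro ⟨hu, hpre, hlen⟩
      obtain ⟨x, hx, hux⟩ := mem_Lang_iff.1 hu
      rw [hlen] at hux
      have hwx : wordOf α x t.w.length = t.w := by
        have h' := congrArg (List.take t.w.length) hux.symm
        rwa [wordOf_take α _ (Nat.le_add_right _ _),
          ← List.prefix_iff_eq_take.1 hpre] at h'
      obtain ⟨hg1, hg2⟩ := hA2 x hx.1 hx.2 hwx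
      rw [hux, key x hg1 hg2]
      split
      · exact Or.inl rfl
      · exact Or.inr rfl
    · have hg1 : γ < 1 := by linarith
      rintro (rfl | rfl)
      · have hk := key γ le_rfl (by linarith)
        rw [if_pos (by linarith)] at hk
        refine ⟨?_, ?_, ?_⟩
        · rw [← hk]; exact wordOf_mem_Lang ⟨hγ0, hg1⟩ _
        · rw [hu₁, List.append_assoc]; exact List.prefix_append _ _
        · rw [← hk, wordOf_length]
      · have hk := key (γ + t.r) (by linarith) (by linarith)
        rw [if_neg (by linarith)] at hk
        refine ⟨?_, ?_, ?_⟩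
        · rw [← hk]; exact wordOf_mem_Lang ⟨by linarith, by linarith⟩ _
        · rw [hu₂, List.append_assoc]; exact List.prefix_append _ _
        · rw [← hk, wordOf_length]
  have hne : u₁ ≠ u₂ := by
    intro h
    rw [hu₁, hu₂, List.append_assoc, List.append_assoc] at h
    have h' := List.append_cancel_left h
    simp at h'
  constructor
  · rw [hset]
    exact Set.ncard_pair hne
  · exact ⟨V, hset⟩
end

section
/- If α has bounded partial quotients, then there exists a constant K_1 > 0 such that min(|P_n|, |M_n|) > K_1·|w_n| for every n ≥ 1. -/
open Set

/-- `α` has bounded partial quotients. -/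
def BoundedPQ (α : ℝ) : Prop :=
  ∃ B : ℤ, ∀ k : ℕ, pq α k ≤ B

/-!
The recursion is the subtractive Euclidean algorithm on `(l, r)`, so the ratio
`max (l/r) (r/l)` is always a complete quotient `1/Gᵏ(α)` of `α` minus a natural number; with
partial quotients at most `B` it stays below `B + 1`. The quantity `D = |M| r + |P| l` is
preserved by every step, and inductively `D ≤ (B + 2) |M| l` and `D ≤ (B + 2) |P| r`: the
inequality for the pair that does not change is inherited, and the one for the new pair follows
from the ratio bound. Since `D ≥ |M| r` and `D ≥ |P| l`, this gives `|M| ≤ (B + 2) |P|` and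
`|P| ≤ (B + 2) |M|`, while `|w| < |M| + |P|`.
-/

noncomputable def gaussIter (α : ℝ) (k : ℕ) : ℝ := (fun x : ℝ => Int.fract x⁻¹)^[k] α

lemma gaussIter_zero (α : ℝ) : gaussIter α 0 = α := rfl

lemma gaussIter_succ (α : ℝ) (k : ℕ) : gaussIter α (k + 1) = Int.fract (gaussIter α k)⁻¹ :=
  Function.iterate_succ_apply' _ _ _

lemma Irrational.gaussIter {α : ℝ} (hα : Irrational α) (k : ℕ) : Irrational (gaussIter α k) := by
  induction k with
  | zero => exact hα
  | succ k ih =>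
    rw [gaussIter_succ, ← Int.self_sub_floor]
    exact ih.inv.sub_intCast _

lemma nonneg_of_pq_le {α : ℝ} {B : ℤ} (hα : 0 ≤ α) (hB : ∀ k, pq α k ≤ B) : 0 ≤ B :=
  (Int.floor_nonneg.2 (inv_nonneg.2 hα)).trans (hB 0)

/-- `y` is a complete quotient `1/Gᵏ(α)` of `α` (`G` the Gauss map) minus a natural number. -/
def IsGaussTail (α y : ℝ) : Prop := ∃ k m : ℕ, y = (gaussIter α k)⁻¹ - m

namespace IsGaussTail

variable {α y : ℝ}

lemma irrational (hα : Irrational α) (hy : IsGaussTail α y) : Irrational y := by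
  obtain ⟨k, m, rfl⟩ := hy
  exact (hα.gaussIter k).inv.sub_natCast m

lemma lt_of_pq_le {B : ℤ} (hB : ∀ k, pq α k ≤ B) (hy : IsGaussTail α y) : y < B + 1 := by
  obtain ⟨k, m, rfl⟩ := hy
  have hfloor : (⌊(gaussIter α k)⁻¹⌋ : ℝ) ≤ B := by exact_mod_cast hB k
  linarith [Int.lt_floor_add_one (gaussIter α k)⁻¹, (Nat.cast_nonneg m : (0 : ℝ) ≤ m)]

lemma sub_one (hy : IsGaussTail α y) : IsGaussTail α (y - 1) := by
  obtain ⟨k, m, rfl⟩ := hy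
  exact ⟨k, m + 1, by push_cast; ring⟩

lemma inv_sub_one (hy : IsGaussTail α y) (h1 : 1 < y) (h2 : y < 2) :
    IsGaussTail α (y - 1)⁻¹ := by
  obtain ⟨k, m, rfl⟩ := hy
  have hfloor : ⌊(gaussIter α k)⁻¹⌋ = m + 1 := by
    rw [Int.floor_eq_iff]
    push_cast
    constructor <;> linarith
  refine ⟨k + 1, 0, ?_⟩
  rw [gaussIter_succ, ← Int.self_sub_floor, hfloor]
  push_cast
  ring

lemma max_sub_one (hy : IsGaussTail α y) (h1 : 1 < y) :
    IsGaussTail α (max (y - 1) (y - 1)⁻¹) := by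
  rcases lt_or_ge y 2 with h2 | h2
  · rw [max_eq_right]
    · exact hy.inv_sub_one h1 h2
    · exact ((by linarith : y - 1 < 1).trans ((one_lt_inv₀ (by linarith)).2 (by linarith))).le
  · rw [max_eq_left]
    · exact hy.sub_one
    · exact (inv_le_one_of_one_le₀ (by linarith)).trans (by linarith)

end IsGaussTail

namespace SDI

def swap (t : SDI) : SDI := ⟨t.r, t.l, t.w, t.P, t.M⟩

lemma step_swap {t : SDI} (h : t.l ≠ t.r) : t.swap.step = t.step.swap := by
  rcases h.lt_or_gt with h | h <;> simp [step, swap, h, not_lt.2 h.le]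

structure Invariant (α : ℝ) (B : ℤ) (t : SDI) : Prop where
  l_pos : 0 < t.l
  r_pos : 0 < t.r
  isGaussTail : IsGaussTail α (max (t.l / t.r) (t.r / t.l))
  length_w_lt : t.w.length < t.M.length + t.P.length
  le_length_M : t.M.length * t.r + t.P.length * t.l ≤ (B + 2) * t.M.length * t.l
  le_length_P : t.M.length * t.r + t.P.length * t.l ≤ (B + 2) * t.P.length * t.r

variable {α : ℝ} {B : ℤ} {t : SDI}

lemma Invariant.swap (h : t.Invariant α B) : t.swap.Invariant α B where
  l_pos := h.r_pos
  r_pos := h.l_pos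
  isGaussTail := max_comm (t.l / t.r) _ ▸ h.isGaussTail
  length_w_lt := by simpa [SDI.swap, add_comm] using h.length_w_lt
  le_length_M := by simpa [SDI.swap, add_comm] using h.le_length_P
  le_length_P := by simpa [SDI.swap, add_comm] using h.le_length_M

lemma invariant_swap_iff : t.swap.Invariant α B ↔ t.Invariant α B :=
  ⟨fun h => h.swap, fun h => h.swap⟩

lemma Invariant.l_ne_r (hα : Irrational α) (h : t.Invariant α B) : t.l ≠ t.r := by
  intro hlr
  apply (h.isGaussTail.irrational hα).ne_one
  rw [hlr, div_self h.r_pos.ne', max_self]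

lemma Invariant.step_of_r_lt_l (hB : ∀ k, pq α k ≤ B) (h : t.Invariant α B) (hrl : t.r < t.l) :
    t.step.Invariant α B := by
  obtain ⟨hl, hr, hgauss, hw, -, hP⟩ := h
  have hratio : 1 < t.l / t.r := (one_lt_div hr).2 hrl
  have hmax : max (t.l / t.r) (t.r / t.l) = t.l / t.r :=
    max_eq_left (((div_lt_one hl).2 hrl).trans hratio).le
  have hsub : t.l / t.r - 1 = (t.l - t.r) / t.r := by field_simp
  have hgauss' : IsGaussTail α (max ((t.l - t.r) / t.r) (t.r / (t.l - t.r))) := by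
    rw [← inv_div (t.l - t.r), ← hsub]
    exact (hmax ▸ hgauss).max_sub_one hratio
  have hbound : t.r / (t.l - t.r) < B + 1 :=
    (le_max_right _ _).trans_lt (hgauss'.lt_of_pq_le hB)
  have hlr : 0 < t.l - t.r := sub_pos.2 hrl
  rw [div_lt_iff₀ hlr] at hbound
  simp only [step, if_pos hrl]
  refine ⟨hlr, hr, hgauss', by simp only [List.length_append]; omega, ?_, ?_⟩
  · simp only [List.length_append, Nat.cast_add]
    nlinarith [mul_le_mul_of_nonneg_left hbound.le
      (by positivity : (0 : ℝ) ≤ t.M.length + t.P.length)]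
  · simp only [List.length_append, Nat.cast_add]
    linarith

lemma Invariant.step (hα : Irrational α) (hB : ∀ k, pq α k ≤ B) (h : t.Invariant α B) :
    t.step.Invariant α B := by
  rcases (h.l_ne_r hα).lt_or_gt with hlr | hrl
  · rw [← invariant_swap_iff, ← step_swap (h.l_ne_r hα)]
    exact h.swap.step_of_r_lt_l hB hlr
  · exact h.step_of_r_lt_l hB hrl

end SDI

/-- `sdi α 1` is one step away from the state `(α, 1 - α, ε, l, r)`, where the invariant is
immediate. -/
def sdiZero (α : ℝ) : SDI := ⟨α, 1 - α, [], [false], [true]⟩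

lemma sdi_succ_eq_iterate {α : ℝ} (h2 : α < 1 / 2) (n : ℕ) :
    sdi α (n + 1) = SDI.step^[n + 1] (sdiZero α) := by
  have hstep : (sdiZero α).step = ⟨α, 1 - 2 * α, [false], [false], [true, false]⟩ := by
    rw [SDI.step, if_neg (show ¬(sdiZero α).r < (sdiZero α).l from not_lt.2 (by
      simp only [sdiZero]; linarith))]
    simp only [sdiZero, List.nil_append, List.singleton_append, SDI.mk.injEq, true_and, and_true]
    ring
  rw [Function.iterate_succ_apply, hstep]
  rfl

lemma invariant_sdiZero {α : ℝ} {B : ℤ} (h0 : 0 < α) (h2 : α < 1 / 2)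
    (hB : ∀ k, pq α k ≤ B) : (sdiZero α).Invariant α B := by
  have hinv : IsGaussTail α α⁻¹ := ⟨0, 0, by simp [gaussIter_zero]⟩
  have hαB : α⁻¹ < B + 1 := hinv.lt_of_pq_le hB
  have hB0 : (0 : ℝ) ≤ B := by exact_mod_cast nonneg_of_pq_le h0.le hB
  rw [inv_lt_iff_one_lt_mul₀ h0] at hαB
  have hr : 0 < 1 - α := by linarith
  refine ⟨h0, hr, ⟨0, 1, ?_⟩, by simp [sdiZero], ?_, ?_⟩
  · have hlt : α / (1 - α) < (1 - α) / α :=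
      ((div_lt_one hr).2 (by linarith)).trans ((one_lt_div h0).2 (by linarith))
    simp only [sdiZero, max_eq_right hlt.le, gaussIter_zero, Nat.cast_one]
    field_simp
  · simp only [sdiZero, List.length_cons, List.length_nil]
    push_cast
    nlinarith
  · simp only [sdiZero, List.length_cons, List.length_nil]
    push_cast
    nlinarith

lemma SDI.invariant_sdi {α : ℝ} {B : ℤ} (hα : Irrational α) (h0 : 0 < α) (h2 : α < 1 / 2)
    (hB : ∀ k, pq α k ≤ B) (n : ℕ) : (sdi α (n + 1)).Invariant α B := by
  rw [sdi_succ_eq_iterate h2]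
  exact Function.Iterate.rec _ (invariant_sdiZero h0 h2 hB) (fun _ h => h.step hα hB) _

lemma SDI.Invariant.length_w_lt_mul_length_P {α : ℝ} {B : ℤ} {t : SDI}
    (h : t.Invariant α B) : (t.w.length : ℝ) < (B + 3) * t.P.length := by
  have hw : (t.w.length : ℝ) < t.M.length + t.P.length := by exact_mod_cast h.length_w_lt
  have hM : (t.M.length : ℝ) * t.r ≤ (B + 2) * t.P.length * t.r := by
    nlinarith [h.le_length_P, h.l_pos]
  have := le_of_mul_le_mul_right hM h.r_pos
  linarith

/-- Lemma: if `α` has bounded partial quotients then there is a constant `K_1 > 0` with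
`min(|P_n|, |M_n|) > K_1·|w_n|` for every `n ≥ 1`. -/
theorem min_length_ge_of_bounded_partial_quotients
    (α : ℝ) (hirr : Irrational α) (h0 : 0 < α) (h2 : α < 1/2) (hbpq : BoundedPQ α) :
    ∃ K₁ : ℝ, 0 < K₁ ∧ ∀ n : ℕ, 1 ≤ n →
      K₁ * (sdi α n).w.length <
        min ((sdi α n).P.length : ℝ) ((sdi α n).M.length : ℝ) := by
  obtain ⟨B, hB⟩ := hbpq
  have hB3 : (0 : ℝ) < B + 3 := by
    have : (0 : ℝ) ≤ B := by exact_mod_cast nonneg_of_pq_le h0.le hB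
    linarith
  refine ⟨(B + 3)⁻¹, inv_pos.2 hB3, fun n hn => ?_⟩
  obtain ⟨n, rfl⟩ := Nat.exists_eq_add_of_le' hn
  have h := SDI.invariant_sdi hirr h0 h2 hB n
  rw [lt_min_iff, inv_mul_lt_iff₀ hB3, inv_mul_lt_iff₀ hB3]
  exact ⟨h.length_w_lt_mul_length_P, by simpa [SDI.swap] using h.swap.length_w_lt_mul_length_P⟩
end
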